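/- arXiv:2311.05339 — 3 statements merged into one kernel-verified Lean document; each statement's English description precedes it below -/
import Mathlib

section
/- Cone condition for the Lasso error: suppose y = Xβ* + ε with β* supported on S, and λ ≥ 2‖Xᵀε/n‖_∞. If β̂ minimizes (1/2n)‖y − Xβ‖₂² + λ‖β‖₁, then the error v = β̂ − β* satisfies ‖v_{S^c}‖₁ ≤ 3‖v_S‖₁. -/
open Matrix

/-- Cone condition for the Lasso error: if `y = Xβ* + ε` with `β*` supported on `S`,
`λ ≥ 2‖Xᵀε/n‖_∞`, and `β̂` minimizes the Lasso objective, then the error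
`v = β̂ − β*` satisfies `‖v_{S^c}‖₁ ≤ 3‖v_S‖₁`. -/
theorem lasso_cone_condition
    {n p : ℕ}
    (X : Matrix (Fin n) (Fin p) ℝ) (y ε : Fin n → ℝ) (βstar βhat : Fin p → ℝ)
    (S : Finset (Fin p)) (lam : ℝ) (hlam : 0 < lam)
    (hsupp : ∀ j ∉ S, βstar j = 0)
    (hy : y = X.mulVec βstar + ε)
    (hlam2 : ∀ j, 2 * |Xᵀ.mulVec ε j| / n ≤ lam)
    (hmin : ∀ b : Fin p → ℝ,
      (1 / (2 * n)) * (∑ i, (y i - X.mulVec βhat i)^2) + lam * ∑ j, |βhat j| ≤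
      (1 / (2 * n)) * (∑ i, (y i - X.mulVec b i)^2) + lam * ∑ j, |b j|) :
    ∑ j ∈ Sᶜ, |βhat j - βstar j| ≤ 3 * ∑ j ∈ S, |βhat j - βstar j| := by
  set v : Fin p → ℝ := fun j => βhat j - βstar j with hv
  have hεy : ∀ i, y i - X.mulVec βstar i = ε i := by
    intro i; simp [hy]
  have hmv : X.mulVec v = fun i => X.mulVec βhat i - X.mulVec βstar i := by
    have hveq : v = βhat - βstar := rfl
    rw [hveq, Matrix.mulVec_sub]; rfl
  have hXv : ∀ i, y i - X.mulVec βhat i = ε i - X.mulVec v i := by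
    intro i
    rw [hmv, hy]
    simp only [Pi.add_apply]
    ring
  have key := hmin βstar
  have e1 : ∑ i, (y i - X.mulVec βhat i)^2 =
      (∑ i, ε i ^ 2) - 2 * (∑ i, ε i * X.mulVec v i) + ∑ i, (X.mulVec v i)^2 := by
    rw [Finset.mul_sum, ← Finset.sum_sub_distrib, ← Finset.sum_add_distrib]
    exact Finset.sum_congr rfl fun i _ => by rw [hXv i]; ring
  have e2 : ∑ i, (y i - X.mulVec βstar i)^2 = ∑ i, ε i ^ 2 :=
    Finset.sum_congr rfl fun i _ => by rw [hεy i]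
  rw [e1, e2] at key
  set E := ∑ i, ε i ^ 2
  set T := ∑ i, ε i * X.mulVec v i with hT
  set Q := ∑ i, (X.mulVec v i)^2 with hQdef
  have hQ : 0 ≤ Q := Finset.sum_nonneg fun i _ => sq_nonneg _
  have hn : (0:ℝ) ≤ 1/(2*(n:ℝ)) := by positivity
  have hc2 : (1:ℝ)/(2*(n:ℝ)) * 2 = 1/(n:ℝ) := by
    rcases Nat.eq_zero_or_pos n with h|h
    · simp [h]
    · have hn0 : (n:ℝ) ≠ 0 := Nat.cast_ne_zero.mpr h.ne'
      field_simp
  have expand : (1/(2*(n:ℝ))) * (E - 2*T + Q)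
      = (1/(2*(n:ℝ)))*E - (1/(n:ℝ))*T + (1/(2*(n:ℝ)))*Q := by
    rw [← hc2]; ring
  have h1 : 0 ≤ (1/(n:ℝ))*T + lam * ((∑ j, |βstar j|) - ∑ j, |βhat j|) := by
    nlinarith [key, expand, mul_nonneg hn hQ]
  -- bound the cross term
  have hswap : T = ∑ j, Xᵀ.mulVec ε j * v j := by
    simp only [hT, Matrix.mulVec, dotProduct, Matrix.transpose_apply,
      Finset.mul_sum, Finset.sum_mul]
    rw [Finset.sum_comm]
    exact Finset.sum_congr rfl fun j _ => Finset.sum_congr rfl fun i _ => by ring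
  have hTb : (1/(n:ℝ))*T ≤ (lam/2) * ∑ j, |v j| := by
    rw [hswap, Finset.mul_sum, Finset.mul_sum]
    apply Finset.sum_le_sum
    intro j _
    have h2 : 2 * (|Xᵀ.mulVec ε j| / n) ≤ lam := by
      have := hlam2 j; rw [mul_div_assoc] at this; exact this
    have hwn : |Xᵀ.mulVec ε j| / n ≤ lam/2 := by linarith
    calc (1/(n:ℝ)) * (Xᵀ.mulVec ε j * v j)
        ≤ (1/(n:ℝ)) * |Xᵀ.mulVec ε j * v j| := by
          apply mul_le_mul_of_nonneg_left (le_abs_self _) (by positivity)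
      _ = (|Xᵀ.mulVec ε j| / n) * |v j| := by rw [abs_mul]; ring
      _ ≤ (lam/2) * |v j| := mul_le_mul_of_nonneg_right hwn (abs_nonneg _)
  -- the ℓ¹ decomposition
  have hsplitv : ∑ j ∈ S, |v j| + ∑ j ∈ Sᶜ, |v j| = ∑ j, |v j| :=
    Finset.sum_add_sum_compl S _
  have hsplits : ∑ j ∈ S, |βstar j| + ∑ j ∈ Sᶜ, |βstar j| = ∑ j, |βstar j| :=
    Finset.sum_add_sum_compl S _
  have hsplith : ∑ j ∈ S, |βhat j| + ∑ j ∈ Sᶜ, |βhat j| = ∑ j, |βhat j| :=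
    Finset.sum_add_sum_compl S _
  have hS : ∑ j ∈ S, (|βstar j| - |βhat j|) ≤ ∑ j ∈ S, |v j| := by
    apply Finset.sum_le_sum
    intro j _
    have h := abs_sub_abs_le_abs_sub (βstar j) (βhat j)
    rw [abs_sub_comm] at h
    simpa [hv] using h
  have hSc : ∑ j ∈ Sᶜ, (|βstar j| - |βhat j|) = -∑ j ∈ Sᶜ, |v j| := by
    rw [← Finset.sum_neg_distrib]
    apply Finset.sum_congr rfl
    intro j hj
    have h0 := hsupp j (Finset.mem_compl.mp hj)
    simp [hv, h0]
  have hBd : (∑ j, |βstar j|) - ∑ j, |βhat j|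
      ≤ (∑ j ∈ S, |v j|) - ∑ j ∈ Sᶜ, |v j| := by
    have hsS : ∑ j ∈ S, (|βstar j| - |βhat j|)
        = ∑ j ∈ S, |βstar j| - ∑ j ∈ S, |βhat j| := Finset.sum_sub_distrib _ _
    have hsSc : ∑ j ∈ Sᶜ, (|βstar j| - |βhat j|)
        = ∑ j ∈ Sᶜ, |βstar j| - ∑ j ∈ Sᶜ, |βhat j| := Finset.sum_sub_distrib _ _
    linarith [hS, hSc, hsplits, hsplith, hsS, hsSc]
  have h3 : lam * ((∑ j, |βstar j|) - ∑ j, |βhat j|)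
      ≤ lam * ((∑ j ∈ S, |v j|) - ∑ j ∈ Sᶜ, |v j|) :=
    mul_le_mul_of_nonneg_left hBd hlam.le
  have hfin : 0 ≤ lam * (3 * (∑ j ∈ S, |v j|) - ∑ j ∈ Sᶜ, |v j|) := by
    nlinarith [h1, hTb, h3, hsplitv]
  have := (mul_nonneg_iff_of_pos_left hlam).mp hfin
  have hfinal : ∑ j ∈ Sᶜ, |v j| ≤ 3 * ∑ j ∈ S, |v j| := by linarith
  simpa [hv] using hfinal
end

section
/- Lasso ℓ₂ error bound: under the assumptions that y = Xβ* + ε with β* supported on S with |S| = s, λ ≥ 2‖Xᵀε/n‖_∞, and the restricted eigenvalue condition vᵀ(XᵀX/n)v ≥ κ‖v‖₂² for all v in the cone G(S) = {v : ‖v_{S^c}‖₁ ≤ 3‖v_S‖₁} with κ > 0, any Lasso minimizer β̂ satisfies ‖β̂ − β*‖₂ ≤ 3√s · λ / κ. -/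
set_option maxHeartbeats 1000000

open Matrix

/-- Lasso ℓ₂ error bound: under support, tuning, and restricted eigenvalue
assumptions, any Lasso minimizer `β̂` satisfies `‖β̂ − β*‖₂ ≤ 3√s·λ/κ`. -/
theorem lasso_l2_error_bound
    {n p : ℕ}
    (X : Matrix (Fin n) (Fin p) ℝ) (y ε : Fin n → ℝ) (βstar βhat : Fin p → ℝ)
    (S : Finset (Fin p)) (lam κ : ℝ) (hκ : 0 < κ) (hlam : 0 < lam)
    (hsupp : ∀ j ∉ S, βstar j = 0)
    (hy : y = X.mulVec βstar + ε)
    (hlam2 : ∀ j, 2 * |Xᵀ.mulVec ε j| / n ≤ lam)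
    (hRE : ∀ v : Fin p → ℝ, (∑ j ∈ Sᶜ, |v j|) ≤ 3 * ∑ j ∈ S, |v j| →
      κ * ∑ j, (v j)^2 ≤ (1 / n) * ∑ i, (X.mulVec v i)^2)
    (hmin : ∀ b : Fin p → ℝ,
      (1 / (2 * n)) * (∑ i, (y i - X.mulVec βhat i)^2) + lam * ∑ j, |βhat j| ≤
      (1 / (2 * n)) * (∑ i, (y i - X.mulVec b i)^2) + lam * ∑ j, |b j|) :
    Real.sqrt (∑ j, (βhat j - βstar j)^2) ≤ 3 * Real.sqrt (S.card) * lam / κ := by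
  set v : Fin p → ℝ := fun j => βhat j - βstar j with hv
  set N : ℝ := (n : ℝ) with hNdef
  have hN0 : (0:ℝ) ≤ N := Nat.cast_nonneg n
  set A : ℝ := ∑ j, Xᵀ.mulVec ε j * v j with hA
  set B : ℝ := ∑ i, (X.mulVec v i)^2 with hB
  set LS : ℝ := ∑ j ∈ S, |v j| with hLS
  set LSc : ℝ := ∑ j ∈ Sᶜ, |v j| with hLSc
  set Q : ℝ := ∑ j, (v j)^2 with hQ
  have hXv : ∀ i, X.mulVec v i = X.mulVec βhat i - X.mulVec βstar i := by
    intro i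
    simp only [Matrix.mulVec, dotProduct, hv, mul_sub, Finset.sum_sub_distrib]
  have hswap : ∑ i, ε i * X.mulVec v i = A := by
    rw [hA]
    simp only [Matrix.mulVec, dotProduct, Finset.mul_sum, Finset.sum_mul,
      Matrix.transpose_apply]
    rw [Finset.sum_comm]
    apply Finset.sum_congr rfl; intro j _
    apply Finset.sum_congr rfl; intro i _
    ring
  -- basic inequality
  have h1 : (1/(2*N)) * B ≤ (1/N) * A + lam * ((∑ j, |βstar j|) - ∑ j, |βhat j|) := by
    have hm := hmin βstar
    have e1 : ∀ i, y i - X.mulVec βstar i = ε i := by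
      intro i; rw [hy]; simp
    have e2 : ∀ i, y i - X.mulVec βhat i = ε i - X.mulVec v i := by
      intro i; rw [hy, hXv]; simp; ring
    have e3 : ∑ i, (y i - X.mulVec βhat i)^2
        = (∑ i, (ε i)^2) - 2 * A + B := by
      have hterm : ∀ i ∈ Finset.univ, (y i - X.mulVec βhat i)^2
          = (ε i)^2 - 2*(ε i * X.mulVec v i) + (X.mulVec v i)^2 := by
        intro i _; rw [e2]; ring
      rw [Finset.sum_congr rfl hterm, Finset.sum_add_distrib, Finset.sum_sub_distrib,
        ← Finset.mul_sum, hswap, hB]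
    have e4 : ∑ i, (y i - X.mulVec βstar i)^2 = ∑ i, (ε i)^2 := by
      apply Finset.sum_congr rfl; intro i _; rw [e1]
    rw [e3, e4] at hm
    have hN2 : (1:ℝ)/(2*N) * (2*A) = (1/N) * A := by
      rcases eq_or_lt_of_le hN0 with h | h
      · rw [← h]; simp
      · field_simp
    nlinarith [hm]
  -- cross term bound
  have h2 : (1/N) * A ≤ (lam/2) * (LS + LSc) := by
    have hsplit : LS + LSc = ∑ j, |v j| := by
      rw [hLS, hLSc, Finset.sum_add_sum_compl]
    rw [hsplit, hA, Finset.mul_sum, Finset.mul_sum]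
    apply Finset.sum_le_sum
    intro j _
    have h1j : Xᵀ.mulVec ε j * v j ≤ |Xᵀ.mulVec ε j| * |v j| := by
      calc Xᵀ.mulVec ε j * v j ≤ |Xᵀ.mulVec ε j * v j| := le_abs_self _
        _ = |Xᵀ.mulVec ε j| * |v j| := abs_mul _ _
    have h2j : (1/N) * |Xᵀ.mulVec ε j| ≤ lam/2 := by
      have := hlam2 j
      rcases eq_or_lt_of_le hN0 with h | h
      · rw [← h]; simp; linarith
      · rw [div_le_iff₀ h] at this
        rw [div_mul_eq_mul_div, one_mul, div_le_iff₀ h]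
        linarith
    calc (1/N) * (Xᵀ.mulVec ε j * v j) ≤ (1/N) * (|Xᵀ.mulVec ε j| * |v j|) := by
          apply mul_le_mul_of_nonneg_left h1j
          positivity
      _ = ((1/N) * |Xᵀ.mulVec ε j|) * |v j| := by ring
      _ ≤ (lam/2) * |v j| := mul_le_mul_of_nonneg_right h2j (abs_nonneg _)
  -- ℓ1 comparison
  have h3 : (∑ j, |βstar j|) - (∑ j, |βhat j|) ≤ LS - LSc := by
    rw [← Finset.sum_add_sum_compl S (fun j => |βstar j|),
      ← Finset.sum_add_sum_compl S (fun j => |βhat j|), hLS, hLSc]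
    have hc1 : ∑ j ∈ Sᶜ, |βstar j| = 0 := by
      apply Finset.sum_eq_zero; intro j hj
      rw [hsupp j (Finset.mem_compl.mp hj)]; simp
    have hc2 : ∑ j ∈ Sᶜ, |βhat j| = ∑ j ∈ Sᶜ, |v j| := by
      apply Finset.sum_congr rfl; intro j hj
      rw [hv]; simp [hsupp j (Finset.mem_compl.mp hj)]
    have hc3 : ∑ j ∈ S, |βstar j| - ∑ j ∈ S, |βhat j| ≤ ∑ j ∈ S, |v j| := by
      rw [← Finset.sum_sub_distrib]
      apply Finset.sum_le_sum; intro j _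
      have := abs_sub_abs_le_abs_sub (βstar j) (βhat j)
      have h2 : |βstar j - βhat j| = |v j| := by rw [hv]; rw [← abs_neg]; congr 1; ring
      linarith
    linarith
  have hB0 : 0 ≤ (1/(2*N)) * B := by
    apply mul_nonneg
    · positivity
    · rw [hB]; positivity
  have hLS0 : 0 ≤ LS := Finset.sum_nonneg fun j _ => abs_nonneg _
  have hLSc0 : 0 ≤ LSc := Finset.sum_nonneg fun j _ => abs_nonneg _
  have h3' : lam * ((∑ j, |βstar j|) - ∑ j, |βhat j|) ≤ lam * (LS - LSc) :=
    mul_le_mul_of_nonneg_left h3 hlam.le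
  have r1 : lam/2*(LS+LSc) = (lam*LS)/2 + (lam*LSc)/2 := by ring
  have r2 : lam*(LS-LSc) = lam*LS - lam*LSc := by ring
  -- cone condition
  have hcone : LSc ≤ 3 * LS := by
    have hc0 : 0 ≤ lam/2*(LS+LSc) + lam*(LS-LSc) := by linarith
    have he : lam/2*(LS+LSc) + lam*(LS-LSc) = lam * ((3*LS - LSc)/2) := by ring
    rw [he] at hc0
    have := (mul_nonneg_iff_of_pos_left hlam).mp hc0
    linarith
  -- restricted eigenvalue
  have hre := hRE v hcone
  rw [← hQ, ← hB] at hre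
  have hre' : κ * Q ≤ 3 * lam * LS := by
    have hBN : (1/N) * B = 2 * ((1/(2*N)) * B) := by
      rcases eq_or_lt_of_le hN0 with h | h
      · rw [← h]; simp
      · field_simp
    have hll : 0 ≤ lam * LSc := mul_nonneg hlam.le hLSc0
    linarith
  -- Cauchy–Schwarz on S
  have hQ0 : 0 ≤ Q := by rw [hQ]; positivity
  have hCS : LS ≤ Real.sqrt S.card * Real.sqrt Q := by
    have hcs : LS^2 ≤ (S.card : ℝ) * ∑ j ∈ S, |v j|^2 :=
      sq_sum_le_card_mul_sum_sq
    have hsub : ∑ j ∈ S, |v j|^2 ≤ Q := by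
      rw [hQ]
      have : ∀ j ∈ S, |v j|^2 = (v j)^2 := fun j _ => sq_abs _
      rw [Finset.sum_congr rfl this]
      exact Finset.sum_le_sum_of_subset_of_nonneg (Finset.subset_univ S)
        (fun j _ _ => sq_nonneg _)
    rw [← Real.sqrt_mul (Nat.cast_nonneg _)]
    rw [Real.le_sqrt hLS0]
    · calc LS^2 ≤ (S.card : ℝ) * ∑ j ∈ S, |v j|^2 := hcs
        _ ≤ (S.card : ℝ) * Q := by
            apply mul_le_mul_of_nonneg_left hsub (Nat.cast_nonneg _)
    · positivity
  -- conclude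
  have hgoal : Real.sqrt (∑ j, (βhat j - βstar j)^2) = Real.sqrt Q := by rw [hQ]
  rw [hgoal]
  set t : ℝ := Real.sqrt Q with ht
  have ht0 : 0 ≤ t := Real.sqrt_nonneg _
  have htQ : t^2 = Q := Real.sq_sqrt hQ0
  have hkt : κ * t ≤ 3 * Real.sqrt S.card * lam := by
    rcases eq_or_lt_of_le ht0 with h | h
    · rw [← h, mul_zero]
      positivity
    · have h5 : κ * t * t ≤ (3 * Real.sqrt S.card * lam) * t := by
        calc κ * t * t = κ * Q := by rw [← htQ]; ring
          _ ≤ 3 * lam * LS := hre'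
          _ ≤ 3 * lam * (Real.sqrt S.card * t) := by
              apply mul_le_mul_of_nonneg_left hCS; positivity
          _ = (3 * Real.sqrt S.card * lam) * t := by ring
      exact le_of_mul_le_mul_right h5 h
  rw [le_div_iff₀ hκ]
  nlinarith [hkt]
end

section
/- Any v ∈ ℝ^p in the cone G(S) = {v : ‖v_{S^c}‖₁ ≤ 3‖v_S‖₁} with ‖v‖₂ = 1 satisfies ‖v‖₁ ≤ 4√s, where s = |S|; consequently, if a symmetric matrix A satisfies |vᵀAv − vᵀBv| ≤ ‖A − B‖_max ‖v‖₁² for all v, and B obeys a restricted eigenvalue bound vᵀBv ≥ κ‖v‖₂² on G(S), then A obeys vᵀAv ≥ (κ − 16 s ‖A − B‖_max)‖v‖₂² on G(S). -/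
/-!
On the cone `‖v_{Sᶜ}‖₁ ≤ 3‖v_S‖₁` the whole ℓ₁ norm is at most `4‖v_S‖₁`, and Cauchy–Schwarz on the
`s` coordinates of `S` gives `‖v_S‖₁ ≤ √s ‖v‖₂`; hence `‖v‖₁² ≤ 16 s ‖v‖₂²`. Feeding this into the
perturbation bound `|vᵀAv − vᵀBv| ≤ c‖v‖₁²` turns the restricted eigenvalue bound for `B` into one
for `A`, at the cost of `16 s c`.
-/

open Finset

variable {ι : Type*} [Fintype ι] [DecidableEq ι]

/-- The cone `G(S)`. -/
def restrictedCone (S : Finset ι) : Set (ι → ℝ) :=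
  {v | ∑ i ∈ Sᶜ, |v i| ≤ 3 * ∑ i ∈ S, |v i|}

lemma sum_abs_le_four_mul_sum_abs_of_mem_restrictedCone {S : Finset ι} {v : ι → ℝ}
    (hv : v ∈ restrictedCone S) : ∑ i, |v i| ≤ 4 * ∑ i ∈ S, |v i| := by
  rw [← sum_add_sum_compl S]
  linarith [show ∑ i ∈ Sᶜ, |v i| ≤ 3 * ∑ i ∈ S, |v i| from hv]

lemma sq_sum_abs_le_of_mem_restrictedCone {S : Finset ι} {v : ι → ℝ}
    (hv : v ∈ restrictedCone S) : (∑ i, |v i|) ^ 2 ≤ 16 * #S * ∑ i, v i ^ 2 := by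
  have hS : (∑ i ∈ S, |v i|) ^ 2 ≤ #S * ∑ i ∈ S, v i ^ 2 := by
    simpa only [sq_abs] using sq_sum_le_card_mul_sum_sq (s := S) (f := fun i => |v i|)
  have hsub : ∑ i ∈ S, v i ^ 2 ≤ ∑ i, v i ^ 2 :=
    sum_le_sum_of_subset_of_nonneg (subset_univ S) fun i _ _ => sq_nonneg (v i)
  calc (∑ i, |v i|) ^ 2 ≤ (4 * ∑ i ∈ S, |v i|) ^ 2 := by
        gcongr
        exact sum_abs_le_four_mul_sum_abs_of_mem_restrictedCone hv
    _ = 16 * (∑ i ∈ S, |v i|) ^ 2 := by ring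
    _ ≤ 16 * #S * ∑ i, v i ^ 2 := by
        rw [mul_assoc]
        gcongr
        exact hS.trans (by gcongr)

lemma sum_abs_le_mul_sqrt_of_mem_restrictedCone {S : Finset ι} {v : ι → ℝ}
    (hv : v ∈ restrictedCone S) :
    ∑ i, |v i| ≤ 4 * √(#S : ℝ) * √(∑ i, v i ^ 2) := by
  have h16 : √(16 : ℝ) = 4 := by
    rw [show (16 : ℝ) = 4 ^ 2 by norm_num, Real.sqrt_sq (by norm_num)]
  calc ∑ i, |v i| = √((∑ i, |v i|) ^ 2) := (Real.sqrt_sq (by positivity)).symm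
    _ ≤ √(16 * #S * ∑ i, v i ^ 2) :=
        Real.sqrt_le_sqrt (sq_sum_abs_le_of_mem_restrictedCone hv)
    _ = 4 * √(#S : ℝ) * √(∑ i, v i ^ 2) := by
        rw [Real.sqrt_mul (by positivity), Real.sqrt_mul (by norm_num), h16]

theorem cone_l1_bound_and_RE_transfer_general
    {p : ℕ} (S : Finset (Fin p)) (A B : Matrix (Fin p) (Fin p) ℝ)
    (c κ : ℝ) (hc : 0 ≤ c)
    (hquad : ∀ v : Fin p → ℝ,
      |(∑ i, ∑ j, v i * A i j * v j) - (∑ i, ∑ j, v i * B i j * v j)|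
        ≤ c * (∑ i, |v i|)^2)
    (hRE : ∀ v : Fin p → ℝ, (∑ i ∈ Sᶜ, |v i|) ≤ 3 * ∑ i ∈ S, |v i| →
      κ * ∑ i, (v i)^2 ≤ ∑ i, ∑ j, v i * B i j * v j) :
    (∀ v : Fin p → ℝ, (∑ i ∈ Sᶜ, |v i|) ≤ 3 * ∑ i ∈ S, |v i| →
      Real.sqrt (∑ i, (v i)^2) = 1 →
      (∑ i, |v i|) ≤ 4 * Real.sqrt (S.card)) ∧
    (∀ v : Fin p → ℝ, (∑ i ∈ Sᶜ, |v i|) ≤ 3 * ∑ i ∈ S, |v i| →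
      (κ - 16 * S.card * c) * ∑ i, (v i)^2 ≤ ∑ i, ∑ j, v i * A i j * v j) := by
  refine ⟨fun v hv hnorm => ?_, fun v hv => ?_⟩
  · simpa only [hnorm, mul_one] using sum_abs_le_mul_sqrt_of_mem_restrictedCone (S := S) hv
  · have hl1 := mul_le_mul_of_nonneg_left (sq_sum_abs_le_of_mem_restrictedCone (S := S) hv) hc
    have hpert := (abs_le.mp (hquad v)).1
    linarith [hRE v hv]

/-- (i) Any unit-ℓ₂ vector in the cone `G(S)` satisfies `‖v‖₁ ≤ 4√s`;
(ii) consequently, if a symmetric matrix `A` satisfies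
`|vᵀAv − vᵀBv| ≤ c‖v‖₁²` for all `v` (with `c = ‖A − B‖_max`), and `B` obeys a
restricted eigenvalue bound `vᵀBv ≥ κ‖v‖₂²` on `G(S)`, then `A` obeys
`vᵀAv ≥ (κ − 16 s c)‖v‖₂²` on `G(S)`. -/
theorem cone_l1_bound_and_RE_transfer
    {p : ℕ} (S : Finset (Fin p)) (A B : Matrix (Fin p) (Fin p) ℝ)
    (hA : A.IsSymm) (hB : B.IsSymm)
    (c κ : ℝ) (hc : 0 ≤ c)
    (hcdef : ∀ i j, |A i j - B i j| ≤ c)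
    (hquad : ∀ v : Fin p → ℝ,
      |(∑ i, ∑ j, v i * A i j * v j) - (∑ i, ∑ j, v i * B i j * v j)|
        ≤ c * (∑ i, |v i|)^2)
    (hRE : ∀ v : Fin p → ℝ, (∑ i ∈ Sᶜ, |v i|) ≤ 3 * ∑ i ∈ S, |v i| →
      κ * ∑ i, (v i)^2 ≤ ∑ i, ∑ j, v i * B i j * v j) :
    (∀ v : Fin p → ℝ, (∑ i ∈ Sᶜ, |v i|) ≤ 3 * ∑ i ∈ S, |v i| →
      Real.sqrt (∑ i, (v i)^2) = 1 →
      (∑ i, |v i|) ≤ 4 * Real.sqrt (S.card)) ∧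
    (∀ v : Fin p → ℝ, (∑ i ∈ Sᶜ, |v i|) ≤ 3 * ∑ i ∈ S, |v i| →
      (κ - 16 * S.card * c) * ∑ i, (v i)^2 ≤ ∑ i, ∑ j, v i * A i j * v j) :=
  cone_l1_bound_and_RE_transfer_general S A B c κ hc hquad hRE
end
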